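/- arXiv:1406.2987 — 3 statements merged into one kernel-verified Lean document; each statement's English description precedes it below -/
import Mathlib

section
/- Let A be a commutative Hopf ℂ-algebra and let J be a minimal Hopf 2-cocycle for A. Then the center of the twisted algebra A_J is trivial, i.e. equals ℂ·1. -/
/-!
If `φ` is central in `A_J`, then, `A` being commutative, the antipode peels the comultiplication
off the commutator `[φ, ψ]_J`, leaving `Σ J(φ₂ ⊗ ψ) φ₁ = Σ J(ψ ⊗ φ₂) φ₁` for every `ψ`. Pairing
this with `J⁻¹` turns `R^J(φ ⊗ ψ)` into `(J⁻¹ * J)(ψ ⊗ φ) = ε(φ) ε(ψ) = R^J(ε(φ) 1 ⊗ ψ)`, so by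
minimality `φ = ε(φ) 1`.
-/

open TensorProduct

noncomputable section

namespace Twisting

/-- Convolution product of linear functionals on a coalgebra. -/
def conv {C : Type*} [AddCommMonoid C] [Module ℂ C] [CoalgebraStruct ℂ C]
    (F G : C →ₗ[ℂ] ℂ) : C →ₗ[ℂ] ℂ :=
  LinearMap.mul' ℂ ℂ ∘ₗ TensorProduct.map F G ∘ₗ Coalgebra.comul

variable (A : Type*) [CommRing A] [HopfAlgebra ℂ A]

/-- A Hopf 2-cocycle for the Hopf algebra `A`:  a convolution-invertible linear functional
`J` on `A ⊗ A` satisfying the 2-cocycle identity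
`Σ J(a₁b₁ ⊗ c) J(a₂ ⊗ b₂) = Σ J(a ⊗ b₁c₁) J(b₂ ⊗ c₂)` (expressed below as an equality of
linear functionals on `(A ⊗ A) ⊗ A`) and the normalization `J(a ⊗ 1) = ε(a) = J(1 ⊗ a)`. -/
structure Hopf2Cocycle where
  J : A ⊗[ℂ] A →ₗ[ℂ] ℂ
  Jinv : A ⊗[ℂ] A →ₗ[ℂ] ℂ
  conv_right_inv : conv J Jinv = Coalgebra.counit
  conv_left_inv : conv Jinv J = Coalgebra.counit
  cocycle : conv (J ∘ₗ TensorProduct.map (LinearMap.mul' ℂ A) LinearMap.id)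
        (LinearMap.mul' ℂ ℂ ∘ₗ TensorProduct.map J Coalgebra.counit)
      = conv (J ∘ₗ TensorProduct.map LinearMap.id (LinearMap.mul' ℂ A)
            ∘ₗ (TensorProduct.assoc ℂ A A A).toLinearMap)
        (LinearMap.mul' ℂ ℂ ∘ₗ TensorProduct.map Coalgebra.counit J
            ∘ₗ (TensorProduct.assoc ℂ A A A).toLinearMap)
  norm_right : ∀ a : A, J (a ⊗ₜ[ℂ] 1) = Coalgebra.counit a
  norm_left : ∀ a : A, J ((1 : A) ⊗ₜ[ℂ] a) = Coalgebra.counit a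

variable {A}

namespace Hopf2Cocycle

/-- The cotriangular form `R^J (a ⊗ b) = Σ J⁻¹(b₁ ⊗ a₁) J(a₂ ⊗ b₂)`. -/
def RJ (c : Hopf2Cocycle A) : A ⊗[ℂ] A →ₗ[ℂ] ℂ :=
  conv (c.Jinv ∘ₗ (TensorProduct.comm ℂ A A).toLinearMap) c.J

/-- `J` is minimal if `R^J` is nondegenerate. -/
def Minimal (c : Hopf2Cocycle A) : Prop :=
  ∀ a : A, (∀ b : A, c.RJ (a ⊗ₜ[ℂ] b) = 0) → a = 0

/-- The multiplication `a ·_J b = Σ a₁b₁ J(a₂ ⊗ b₂)` of the twisted algebra `A_J`. -/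
def mulJ (c : Hopf2Cocycle A) : A ⊗[ℂ] A →ₗ[ℂ] A :=
  (TensorProduct.rid ℂ A).toLinearMap
    ∘ₗ TensorProduct.map (LinearMap.mul' ℂ A) c.J
    ∘ₗ Coalgebra.comul

end Hopf2Cocycle

/-- Gauge equivalence of Hopf 2-cocycles, at the level of the underlying bilinear forms:
`J'(a ⊗ b) = Σ x(a₁) x(b₁) J(a₂ ⊗ b₂) x⁻¹(a₃b₃)` for some convolution-invertible
linear functional `x` with `x(1) = 1`. -/
def GaugeEquiv (J J' : A ⊗[ℂ] A →ₗ[ℂ] ℂ) : Prop :=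
  ∃ x xinv : A →ₗ[ℂ] ℂ,
    conv x xinv = Coalgebra.counit ∧ conv xinv x = Coalgebra.counit ∧
    x 1 = 1 ∧
    J' = conv (LinearMap.mul' ℂ ℂ ∘ₗ TensorProduct.map x x)
           (conv J (xinv ∘ₗ LinearMap.mul' ℂ A))

/-- A realization of the twisted algebra `A_J` as an honest (possibly noncommutative)
`ℂ`-algebra `B`: a linear isomorphism matching the twisted multiplication `·_J` with the
multiplication of `B` and preserving units. -/
structure TwistedModel (c : Hopf2Cocycle A) (B : Type*) [Ring B] [Algebra ℂ B] where
  e : A ≃ₗ[ℂ] B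
  map_one : e 1 = 1
  map_mul : ∀ a b : A, e (c.mulJ (a ⊗ₜ[ℂ] b)) = e a * e b

open scoped Coalgebra

section Sweedler

variable {ι : Type*}

lemma conv_apply_eq_sum {C : Type*} [AddCommMonoid C] [Module ℂ C] [CoalgebraStruct ℂ C]
    (F G : C →ₗ[ℂ] ℂ) {x : C} (r : Coalgebra.Repr ℂ x ι) :
    conv F G x = ∑ i ∈ r.index, F (r.left i) * G (r.right i) := by
  simp [conv, ← r.eq]

lemma sum_counit_right_smul {R C : Type*} [CommSemiring R] [AddCommMonoid C] [Module R C]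
    [Coalgebra R C] {a : C} (r : Coalgebra.Repr R a ι) :
    ∑ i ∈ r.index, Coalgebra.counit (R := R) (r.right i) • r.left i = a := by
  simpa only [map_sum, TensorProduct.rid_tmul, one_smul]
    using congr(TensorProduct.rid R C $(Coalgebra.sum_tmul_counit_eq r))

lemma sum_counit_mul_apply {R C : Type*} [CommSemiring R] [AddCommMonoid C] [Module R C]
    [Coalgebra R C] (f : C →ₗ[R] R) {a : C} (r : Coalgebra.Repr R a ι) :
    ∑ i ∈ r.index, Coalgebra.counit (R := R) (r.left i) * f (r.right i) = f a := by
  simpa only [map_sum, map_smul, smul_eq_mul] using congr(f $(Coalgebra.sum_counit_smul r))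

def reprOne {R B : Type*} [CommSemiring R] [Semiring B] [Bialgebra R B] :
    Coalgebra.Repr R (1 : B) Unit where
  index := {()}
  left _ := 1
  right _ := 1
  eq := by simp [Algebra.TensorProduct.one_def]

/-- Since `γ ψ = Σ S(ψ₁) ψ₂ γ(ψ₃)`, the map `γ` is recovered from `y ↦ Σ y₁ γ(y₂)`. -/
lemma eq_zero_of_mul'_lTensor_comul_eq_zero {R B : Type*} [CommSemiring R] [Semiring B]
    [HopfAlgebra R B] (γ : B →ₗ[R] B)
    (h : ∀ y, LinearMap.mul' R B (γ.lTensor B (Coalgebra.comul y)) = 0) :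
    γ = 0 := by
  ext ψ
  set r := ℛ R ψ
  have coassoc := Coalgebra.sum_map_tmul_tmul_eq (HopfAlgebra.antipode R) LinearMap.id γ ψ
    (a₁ := fun i => ℛ R (r.left i)) (a₂ := fun i => ℛ R (r.right i))
  have hmul := congr(LinearMap.mul' R B ((LinearMap.mul' R B).lTensor B $coassoc))
  simp only [map_sum, LinearMap.lTensor_tmul, LinearMap.mul'_apply, LinearMap.id_apply] at hmul
  calc γ ψ = γ (∑ i ∈ r.index, Coalgebra.counit (R := R) (r.left i) • r.right i) := by
        rw [Coalgebra.sum_counit_smul]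
    _ = ∑ i ∈ r.index, (∑ j ∈ (ℛ R (r.left i)).index,
          HopfAlgebra.antipode R ((ℛ R (r.left i)).left j) * (ℛ R (r.left i)).right j) *
            γ (r.right i) := by
        simp [HopfAlgebra.sum_antipode_mul_eq_smul]
    _ = ∑ i ∈ r.index, HopfAlgebra.antipode R (r.left i) *
          LinearMap.mul' R B (γ.lTensor B (Coalgebra.comul (r.right i))) := by
        simp only [← (ℛ R (r.right _)).eq, map_sum, LinearMap.lTensor_tmul, LinearMap.mul'_apply,
          Finset.mul_sum, Finset.sum_mul, mul_assoc]
        exact hmul.symm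
    _ = 0 := by simp [h]

end Sweedler

namespace Hopf2Cocycle

variable (c : Hopf2Cocycle A) {ι κ : Type*}

lemma mulJ_tmul_eq_sum {a b : A} (ra : Coalgebra.Repr ℂ a ι) (rb : Coalgebra.Repr ℂ b κ) :
    c.mulJ (a ⊗ₜ[ℂ] b) = ∑ i ∈ ra.index, ∑ j ∈ rb.index,
      c.J (ra.right i ⊗ₜ[ℂ] rb.right j) • (ra.left i * rb.left j) := by
  simp [mulJ, ← (ra.tmul rb).eq, Finset.sum_product]

lemma mulJ_one_tmul (b : A) : c.mulJ ((1 : A) ⊗ₜ[ℂ] b) = b := by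
  rw [mulJ_tmul_eq_sum c reprOne (ℛ ℂ b)]
  simp [reprOne, c.norm_left, sum_counit_right_smul]

lemma mulJ_tmul_one (a : A) : c.mulJ (a ⊗ₜ[ℂ] (1 : A)) = a := by
  rw [mulJ_tmul_eq_sum c (ℛ ℂ a) reprOne]
  simp [reprOne, c.norm_right, sum_counit_right_smul]

lemma Jinv_tmul_one (a : A) : c.Jinv (a ⊗ₜ[ℂ] 1) = Coalgebra.counit a := by
  have h := LinearMap.congr_fun c.conv_right_inv (a ⊗ₜ[ℂ] 1)
  rw [conv_apply_eq_sum _ _ ((ℛ ℂ a).tmul reprOne)] at h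
  calc c.Jinv (a ⊗ₜ[ℂ] 1)
      = ∑ i ∈ (ℛ ℂ a).index,
          Coalgebra.counit ((ℛ ℂ a).left i) * c.Jinv ((ℛ ℂ a).right i ⊗ₜ[ℂ] 1) :=
        (sum_counit_mul_apply (c.Jinv ∘ₗ (TensorProduct.mk ℂ A A).flip 1) (ℛ ℂ a)).symm
    _ = Coalgebra.counit a := by simpa [reprOne, c.norm_right] using h

lemma RJ_one_tmul (b : A) : c.RJ ((1 : A) ⊗ₜ[ℂ] b) = Coalgebra.counit b := by
  rw [RJ, conv_apply_eq_sum _ _ (reprOne.tmul (ℛ ℂ b))]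
  simp [reprOne, c.norm_left, c.Jinv_tmul_one, sum_counit_mul_apply]

lemma sum_J_smul_comm_of_central {φ : A} (hφ : ∀ ψ, c.mulJ (φ ⊗ₜ[ℂ] ψ) = c.mulJ (ψ ⊗ₜ[ℂ] φ))
    (r : Coalgebra.Repr ℂ φ ι) (ψ : A) :
    ∑ i ∈ r.index, c.J (r.right i ⊗ₜ[ℂ] ψ) • r.left i
      = ∑ i ∈ r.index, c.J (ψ ⊗ₜ[ℂ] r.right i) • r.left i := by
  -- `γ y = Σ (J(φ₂ ⊗ y) - J(y ⊗ φ₂)) φ₁`; as `A` is commutative, `Σ y₁ γ(y₂) = [φ, y]_J`.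
  set γ : A →ₗ[ℂ] A := ∑ i ∈ r.index, LinearMap.smulRight
    (c.J ∘ₗ TensorProduct.mk ℂ A A (r.right i) - c.J ∘ₗ (TensorProduct.mk ℂ A A).flip (r.right i))
    (r.left i)
  have hγ : γ = 0 := eq_zero_of_mul'_lTensor_comul_eq_zero γ fun y => by
    have hy := hφ y
    rw [mulJ_tmul_eq_sum c r (ℛ ℂ y), mulJ_tmul_eq_sum c (ℛ ℂ y) r, Finset.sum_comm,
      ← sub_eq_zero, ← Finset.sum_sub_distrib] at hy
    simp only [γ, ← (ℛ ℂ y).eq, map_sum, LinearMap.lTensor_tmul, LinearMap.mul'_apply, ← hy]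
    refine Finset.sum_congr rfl fun k _ => ?_
    rw [mul_comm]
    simp only [LinearMap.sum_apply, LinearMap.smulRight_apply, LinearMap.sub_apply,
      LinearMap.comp_apply, TensorProduct.mk_apply, LinearMap.flip_apply, sub_smul,
      Finset.sum_sub_distrib, sub_mul, Finset.sum_mul, smul_mul_assoc, mul_comm ((ℛ ℂ y).left k)]
  simpa [γ, sub_smul, Finset.sum_sub_distrib, sub_eq_zero] using congr($hγ ψ)

lemma RJ_tmul_of_central {φ : A} (hφ : ∀ ψ, c.mulJ (φ ⊗ₜ[ℂ] ψ) = c.mulJ (ψ ⊗ₜ[ℂ] φ)) (ψ : A) :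
    c.RJ (φ ⊗ₜ[ℂ] ψ) = Coalgebra.counit φ * Coalgebra.counit ψ := by
  set rφ := ℛ ℂ φ
  set rψ := ℛ ℂ ψ
  have hflip : ∀ j, ∑ i ∈ rφ.index,
        c.Jinv (rψ.left j ⊗ₜ[ℂ] rφ.left i) * c.J (rφ.right i ⊗ₜ[ℂ] rψ.right j)
      = ∑ i ∈ rφ.index, c.Jinv (rψ.left j ⊗ₜ[ℂ] rφ.left i) * c.J (rψ.right j ⊗ₜ[ℂ] rφ.right i) :=
    fun j => by
      simpa [TensorProduct.tmul_sum, map_sum, mul_comm] using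
        congr(c.Jinv (rψ.left j ⊗ₜ[ℂ] $(c.sum_J_smul_comm_of_central hφ rφ (rψ.right j))))
  calc c.RJ (φ ⊗ₜ[ℂ] ψ)
      = ∑ j ∈ rψ.index, ∑ i ∈ rφ.index,
          c.Jinv (rψ.left j ⊗ₜ[ℂ] rφ.left i) * c.J (rφ.right i ⊗ₜ[ℂ] rψ.right j) := by
        rw [RJ, conv_apply_eq_sum _ _ (rφ.tmul rψ), Coalgebra.Repr.tmul_index, Finset.sum_product,
          Finset.sum_comm]
        simp
    _ = ∑ j ∈ rψ.index, ∑ i ∈ rφ.index,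
          c.Jinv (rψ.left j ⊗ₜ[ℂ] rφ.left i) * c.J (rψ.right j ⊗ₜ[ℂ] rφ.right i) :=
        Finset.sum_congr rfl fun j _ => hflip j
    _ = conv c.Jinv c.J (ψ ⊗ₜ[ℂ] φ) := by
        rw [conv_apply_eq_sum _ _ (rψ.tmul rφ), Coalgebra.Repr.tmul_index, Finset.sum_product]
        simp
    _ = Coalgebra.counit φ * Coalgebra.counit ψ := by
        rw [c.conv_left_inv]
        simp

end Hopf2Cocycle


/-- If `J` is a minimal Hopf 2-cocycle for a commutative Hopf `ℂ`-algebra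
`A`, then the center of the twisted algebra `A_J` is trivial, i.e. equals `ℂ·1`. -/
theorem statement4 (A : Type*) [CommRing A] [HopfAlgebra ℂ A] (c : Hopf2Cocycle A)
    (hmin : c.Minimal) :
    {φ : A | ∀ ψ : A, c.mulJ (φ ⊗ₜ[ℂ] ψ) = c.mulJ (ψ ⊗ₜ[ℂ] φ)}
      = Set.range (fun z : ℂ => z • (1 : A)) := by
  ext φ
  constructor
  · intro hφ
    refine ⟨Coalgebra.counit φ, (sub_eq_zero.mp (hmin _ fun ψ => ?_)).symm⟩
    rw [TensorProduct.sub_tmul, map_sub, ← TensorProduct.smul_tmul', map_smul,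
      c.RJ_tmul_of_central hφ, c.RJ_one_tmul, smul_eq_mul, sub_self]
  · rintro ⟨z, rfl⟩ ψ
    rw [← TensorProduct.smul_tmul', TensorProduct.tmul_smul, map_smul, map_smul,
      c.mulJ_one_tmul, c.mulJ_tmul_one]

end Twisting
end
end

section
/- Let A be a commutative Hopf ℂ-algebra and J a Hopf 2-cocycle for A. If φ ∈ A is central in the twisted algebra A_J, then J(φ ⊗ ψ) = J(ψ ⊗ φ) for every ψ ∈ A; moreover, in that case R^J(ψ ⊗ φ) = ε(ψ)ε(φ) for every ψ ∈ A, so in particular R^J(ψ ⊗ φ) = 0 whenever ε(φ) = 0 or ε(ψ) = 0. -/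
open TensorProduct

noncomputable section

namespace Twisting

variable (A : Type*) [CommRing A] [HopfAlgebra ℂ A]

variable {A}

/-!
Since `ε` is multiplicative, `ε(a ·_J b) = J(a ⊗ b)`, so centrality of `φ` already gives
`J(φ ⊗ ψ) = J(ψ ⊗ φ)`. For `R^J`, let `δ = J - J ∘ flip` and `g(b) = Σ φ₁ δ(φ₂ ⊗ b)`.
As `A` is commutative, `φ ·_J t - t ·_J φ = Σ t₁ g(t₂)`, i.e. centrality says `id * g = 0` in the
convolution algebra `End(A)`. There `id` is invertible with inverse the antipode, so `g = 0`.
Pairing `g(ψ₂)` with `J⁻¹(- ⊗ ψ₁)` gives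
`Σ J⁻¹(φ₁ ⊗ ψ₁) J(ψ₂ ⊗ φ₂) = Σ J⁻¹(φ₁ ⊗ ψ₁) J(φ₂ ⊗ ψ₂) = ε(φ) ε(ψ)`.
-/

open Coalgebra WithConv

section ContractSecond

variable {R C : Type*} [CommSemiring R] [AddCommMonoid C] [Module R C] [Coalgebra R C]

/-- `contractSecond σ φ b = Σ σ(φ₂ ⊗ b) φ₁`. -/
def contractSecond (σ : C ⊗[R] C →ₗ[R] R) (φ : C) : C →ₗ[R] C :=
  (TensorProduct.rid R C).toLinearMap ∘ₗ σ.lTensor C ∘ₗ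
    (TensorProduct.assoc R C C C).toLinearMap ∘ₗ TensorProduct.mk R (C ⊗[R] C) C (comul φ)

lemma _root_.Coalgebra.Repr.contractSecond_apply {ι : Type*} {φ : C} (𝓡 : Repr R φ ι)
    (σ : C ⊗[R] C →ₗ[R] R) (b : C) :
    contractSecond σ φ b = ∑ i ∈ 𝓡.index, σ (𝓡.right i ⊗ₜ b) • 𝓡.left i := by
  simp [contractSecond, ← 𝓡.eq]

lemma convMul_tmul_eq_zero_of_contractSecond_eq_zero {σ : C ⊗[R] C →ₗ[R] R} {φ : C}
    (h : contractSecond σ φ = 0) (F : C ⊗[R] C →ₗ[R] R) (ψ : C) :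
    (toConv F * toConv σ).ofConv (φ ⊗ₜ ψ) = 0 := by
  rw [LinearMap.convMul_apply, comul_tmul, ← (ℛ R φ).eq, ← (ℛ R ψ).eq]
  simp only [tmul_sum, sum_tmul, map_sum, AlgebraTensorModule.tensorTensorTensorComm_tmul,
    map_tmul, LinearMap.mul'_apply]
  refine Finset.sum_eq_zero fun j _ ↦ ?_
  calc _ = F (contractSecond σ φ ((ℛ R ψ).right j) ⊗ₜ (ℛ R ψ).left j) := by
        simp [(ℛ R φ).contractSecond_apply, sum_tmul, ← smul_tmul', mul_comm]
    _ = 0 := by simp [h]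

lemma comp_comm_convMul_tmul (F G : C ⊗[R] C →ₗ[R] R) (ψ φ : C) :
    (toConv (F ∘ₗ (TensorProduct.comm R C C).toLinearMap) * toConv G).ofConv (ψ ⊗ₜ φ) =
      (toConv F * toConv (G ∘ₗ (TensorProduct.comm R C C).toLinearMap)).ofConv (φ ⊗ₜ ψ) := by
  simp only [LinearMap.convMul_apply, comul_tmul, ← (ℛ R ψ).eq, ← (ℛ R φ).eq, tmul_sum, sum_tmul,
    map_sum, AlgebraTensorModule.tensorTensorTensorComm_tmul, map_tmul, LinearMap.coe_comp,
    LinearEquiv.coe_coe, Function.comp_apply, comm_tmul, LinearMap.mul'_apply]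
  exact Finset.sum_comm

end ContractSecond

lemma _root_.HopfAlgebra.eq_zero_of_id_convMul_eq_zero {R C : Type*} [CommSemiring R] [Semiring C]
    [HopfAlgebra R C] {f : WithConv (C →ₗ[R] C)} (h : toConv LinearMap.id * f = 0) : f = 0 :=
  calc f = toConv (HopfAlgebra.antipode R) * toConv LinearMap.id * f := by
        rw [LinearMap.antipode_mul_id, one_mul]
    _ = 0 := by rw [mul_assoc, h, mul_zero]

section TwistMul

variable {R B : Type*} [CommSemiring R] [CommSemiring B] [Bialgebra R B]

/-- `twistMul σ (a ⊗ b) = Σ a₁b₁ σ(a₂ ⊗ b₂)`. -/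
def twistMul (σ : B ⊗[R] B →ₗ[R] R) : B ⊗[R] B →ₗ[R] B :=
  (TensorProduct.rid R B).toLinearMap ∘ₗ TensorProduct.map (LinearMap.mul' R B) σ ∘ₗ comul

lemma counit_twistMul (σ : B ⊗[R] B →ₗ[R] R) (x : B ⊗[R] B) :
    counit (R := R) (twistMul σ x) = σ x := by
  induction x using TensorProduct.induction_on with
  | zero => simp
  | add x y hx hy => simp [hx, hy]
  | tmul a b =>
    conv_rhs => rw [← sum_counit_smul (ℛ R a), ← sum_counit_smul (ℛ R b)]
    simp only [twistMul, LinearMap.coe_comp, LinearEquiv.coe_coe, Function.comp_apply,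
      comul_tmul, ← (ℛ R a).eq, ← (ℛ R b).eq, tmul_sum, sum_tmul, map_sum,
      AlgebraTensorModule.tensorTensorTensorComm_tmul, map_tmul, LinearMap.mul'_apply, rid_tmul,
      map_smul, Bialgebra.counit_mul, smul_eq_mul, tmul_smul]
    simp only [← smul_tmul', map_smul, smul_eq_mul, Finset.mul_sum]
    exact Finset.sum_congr rfl fun _ _ ↦ Finset.sum_congr rfl fun _ _ ↦ by ring

lemma twistMul_comp_comm_tmul (σ : B ⊗[R] B →ₗ[R] R) (a b : B) :
    twistMul (σ ∘ₗ (TensorProduct.comm R B B).toLinearMap) (a ⊗ₜ b) = twistMul σ (b ⊗ₜ a) := by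
  simp only [twistMul, LinearMap.coe_comp, LinearEquiv.coe_coe, Function.comp_apply, comul_tmul,
    ← (ℛ R a).eq, ← (ℛ R b).eq, tmul_sum, sum_tmul, map_sum,
    AlgebraTensorModule.tensorTensorTensorComm_tmul, map_tmul, LinearMap.mul'_apply, comm_tmul,
    rid_tmul]
  rw [Finset.sum_comm]
  simp [mul_comm]

lemma id_convMul_contractSecond (σ : B ⊗[R] B →ₗ[R] R) (φ t : B) :
    (toConv LinearMap.id * toConv (contractSecond σ φ)).ofConv t = twistMul σ (φ ⊗ₜ t) := by
  simp only [(ℛ R t).convMul_apply, LinearMap.id_coe, id_eq, (ℛ R φ).contractSecond_apply,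
    twistMul, LinearMap.coe_comp, LinearEquiv.coe_coe, Function.comp_apply, comul_tmul,
    ← (ℛ R φ).eq, ← (ℛ R t).eq, tmul_sum, sum_tmul, map_sum,
    AlgebraTensorModule.tensorTensorTensorComm_tmul, map_tmul, LinearMap.mul'_apply, rid_tmul]
  simp only [Finset.mul_sum, Algebra.mul_smul_comm, mul_comm]

end TwistMul

lemma twistMul_sub {R B : Type*} [CommRing R] [CommRing B] [Bialgebra R B]
    (σ τ : B ⊗[R] B →ₗ[R] R) : twistMul (σ - τ) = twistMul σ - twistMul τ := by
  ext a b
  simp [twistMul, ← (ℛ R a).eq, ← (ℛ R b).eq, sum_tmul, tmul_sum, sub_smul,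
    Finset.sum_sub_distrib]

lemma contractSecond_sub_comp_comm_eq_zero {R B : Type*} [CommRing R] [CommRing B]
    [HopfAlgebra R B] {σ : B ⊗[R] B →ₗ[R] R} {φ : B}
    (h : ∀ t, twistMul σ (φ ⊗ₜ t) = twistMul σ (t ⊗ₜ φ)) :
    contractSecond (σ - σ ∘ₗ (TensorProduct.comm R B B).toLinearMap) φ = 0 := by
  have h_id_mul : toConv LinearMap.id *
      toConv (contractSecond (σ - σ ∘ₗ (TensorProduct.comm R B B).toLinearMap) φ) = 0 := by
    ext t
    rw [id_convMul_contractSecond, twistMul_sub, LinearMap.sub_apply, twistMul_comp_comm_tmul,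
      h t, sub_self]
    rfl
  exact congrArg ofConv (HopfAlgebra.eq_zero_of_id_convMul_eq_zero h_id_mul)

lemma conv_eq_ofConv_convMul {C : Type*} [AddCommMonoid C] [Module ℂ C] [CoalgebraStruct ℂ C]
    (F G : C →ₗ[ℂ] ℂ) : conv F G = (toConv F * toConv G).ofConv := rfl

lemma Hopf2Cocycle.mulJ_eq_twistMul (c : Hopf2Cocycle A) : c.mulJ = twistMul c.J := rfl

/-- If `φ` is central in the twisted algebra `A_J` of a commutative Hopf
`ℂ`-algebra `A`, then `J(φ ⊗ ψ) = J(ψ ⊗ φ)` for all `ψ`; moreover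
`R^J(ψ ⊗ φ) = ε(ψ)ε(φ)` for all `ψ`, so in particular `R^J(ψ ⊗ φ) = 0` whenever
`ε(φ) = 0` or `ε(ψ) = 0`. -/
theorem statement7 (A : Type*) [CommRing A] [HopfAlgebra ℂ A] (c : Hopf2Cocycle A)
    (φ : A) (hφ : ∀ ψ : A, c.mulJ (φ ⊗ₜ[ℂ] ψ) = c.mulJ (ψ ⊗ₜ[ℂ] φ)) :
    (∀ ψ : A, c.J (φ ⊗ₜ[ℂ] ψ) = c.J (ψ ⊗ₜ[ℂ] φ)) ∧
    (∀ ψ : A, c.RJ (ψ ⊗ₜ[ℂ] φ)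
      = Coalgebra.counit (R := ℂ) ψ * Coalgebra.counit (R := ℂ) φ) ∧
    (∀ ψ : A, (Coalgebra.counit (R := ℂ) φ = 0 ∨ Coalgebra.counit (R := ℂ) ψ = 0) →
      c.RJ (ψ ⊗ₜ[ℂ] φ) = 0) := by
  have J_comm (ψ : A) : c.J (φ ⊗ₜ ψ) = c.J (ψ ⊗ₜ φ) := by
    rw [← counit_twistMul c.J, ← counit_twistMul c.J, ← c.mulJ_eq_twistMul, hφ]
  have RJ_eq (ψ : A) : c.RJ (ψ ⊗ₜ φ) = counit (R := ℂ) ψ * counit (R := ℂ) φ := by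
    have h_vanish := convMul_tmul_eq_zero_of_contractSecond_eq_zero
      (contractSecond_sub_comp_comm_eq_zero hφ) c.Jinv ψ
    calc c.RJ (ψ ⊗ₜ φ)
        = (toConv c.Jinv * toConv (c.J ∘ₗ (TensorProduct.comm ℂ A A).toLinearMap)).ofConv
            (φ ⊗ₜ ψ) := comp_comm_convMul_tmul _ _ _ _
      _ = (toConv c.Jinv * toConv c.J).ofConv (φ ⊗ₜ ψ) -
            (toConv c.Jinv * toConv (c.J - c.J ∘ₗ (TensorProduct.comm ℂ A A).toLinearMap)).ofConv
              (φ ⊗ₜ ψ) := by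
        rw [toConv_sub, mul_sub, ofConv_sub, LinearMap.sub_apply, sub_sub_cancel]
      _ = counit (R := ℂ) ψ * counit (R := ℂ) φ := by
        rw [h_vanish, sub_zero, ← conv_eq_ofConv_convMul, c.conv_left_inv]
        simp
  refine ⟨J_comm, RJ_eq, fun ψ hε ↦ ?_⟩
  rcases hε with hε | hε <;> simp [RJ_eq, hε]

end Twisting
end
end

section
/- Let Γ be a free abelian group of finite rank and let J be a Hopf 2-cocycle for the group Hopf algebra ℂ[Γ]. Then Γ₀ := {g ∈ Γ : J(g ⊗ h) = J(h ⊗ g) for all h ∈ Γ} is a subgroup of Γ, and the center of the twisted algebra ℂ[Γ]_J equals the ℂ-linear span of Γ₀ (i.e. the group algebra ℂ[Γ₀] sitting inside ℂ[Γ]_J). -/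
open TensorProduct

noncomputable section

namespace Twisting

variable (A : Type*) [CommRing A] [HopfAlgebra ℂ A]

variable {A}

/-- A realization of the commutative Hopf `ℂ`-algebra `A` as the group Hopf algebra
`ℂ[Γ]` of the (multiplicative) abelian group `Γ`: a monoid homomorphism `of : Γ → A`
whose image is a `ℂ`-basis of `A` consisting of grouplike elements, with
`S(of g) = of g⁻¹`. -/
structure GroupLikeBasis (Γ : Type*) [CommGroup Γ] (A : Type*) [CommRing A]
    [HopfAlgebra ℂ A] where
  of : Γ →* A
  basis : Module.Basis Γ ℂ A
  basis_eq : ∀ g : Γ, basis g = of g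
  comul_of : ∀ g : Γ, Coalgebra.comul (R := ℂ) (of g) = of g ⊗ₜ[ℂ] of g
  counit_of : ∀ g : Γ, Coalgebra.counit (R := ℂ) (of g) = (1 : ℂ)
  antipode_of : ∀ g : Γ, HopfAlgebra.antipode (R := ℂ) (of g) = of g⁻¹

/-- `Γ` is a free abelian group of finite rank. -/
def IsFreeAbelianOfFiniteRank (Γ : Type*) [CommGroup Γ] : Prop :=
  ∃ n : ℕ, Nonempty (Γ ≃* Multiplicative (Fin n → ℤ))

/-!
On grouplikes `J` restricts to a 2-cocycle `σ : Γ × Γ → ℂˣ` with trivial coefficients. Since `Γ` is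
abelian, the cocycle identity makes the commutator `σ(g, h) / σ(h, g)` multiplicative in `g`, so
`Γ₀` is the kernel of a homomorphism `Γ →* (Γ → ℂˣ)`. In `ℂ[Γ]_J` one has `g ·_J h = σ(g, h) gh`;
comparing the coefficients of `gh` in `a ·_J h` and `h ·_J a` shows that `a` is central exactly
when its support lies in `Γ₀`.
-/

section Bicharacter

variable {G M : Type*} [CommGroup G] [CommGroup M]

def IsTwoCocycle (σ : G → G → M) : Prop :=
  ∀ g h k, σ (g * h) k * σ g h = σ g (h * k) * σ h k

variable {σ : G → G → M}

theorem IsTwoCocycle.div_swap_mul_left (hσ : IsTwoCocycle σ) (g h k : G) :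
    σ (g * h) k / σ k (g * h) = σ g k / σ k g * (σ h k / σ k h) := by
  have e1 := hσ g h k
  have e2 := hσ g k h
  have e3 := hσ k g h
  rw [mul_comm k h] at e2
  rw [mul_comm k g] at e3
  rw [div_mul_div_comm, div_eq_div_iff_mul_eq_mul]
  refine mul_right_cancel (b := σ g h) ?_
  calc σ (g * h) k * (σ k g * σ k h) * σ g h
      = σ (g * h) k * σ g h * (σ k g * σ k h) := by ac_rfl
    _ = σ g (h * k) * σ h k * (σ k g * σ k h) := by rw [e1]
    _ = σ g (h * k) * σ k h * (σ h k * σ k g) := by ac_rfl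
    _ = σ (g * k) h * σ g k * (σ h k * σ k g) := by rw [e2]
    _ = σ g k * σ h k * (σ (g * k) h * σ k g) := by ac_rfl
    _ = σ g k * σ h k * (σ k (g * h) * σ g h) := by rw [e3]
    _ = σ g k * σ h k * σ k (g * h) * σ g h := by ac_rfl

def IsTwoCocycle.commutator (hσ : IsTwoCocycle σ) : G →* (G → M) where
  toFun g k := σ g k / σ k g
  map_one' := funext fun k => by
    simpa using (hσ.div_swap_mul_left 1 1 k).symm
  map_mul' g h := funext (hσ.div_swap_mul_left g h)

theorem IsTwoCocycle.mem_ker_commutator (hσ : IsTwoCocycle σ) (g : G) :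
    g ∈ hσ.commutator.ker ↔ ∀ h, σ g h = σ h g := by
  simp [MonoidHom.mem_ker, funext_iff, IsTwoCocycle.commutator, div_eq_one]

end Bicharacter

theorem _root_.IsGroupLikeElem.tmul {R A B : Type*} [CommSemiring R]
    [AddCommMonoid A] [Module R A] [Coalgebra R A] [AddCommMonoid B] [Module R B] [Coalgebra R B]
    {a : A} {b : B}
    (ha : IsGroupLikeElem R a) (hb : IsGroupLikeElem R b) : IsGroupLikeElem R (a ⊗ₜ[R] b) where
  counit_eq_one := by simp [TensorProduct.counit_def, ha.counit_eq_one, hb.counit_eq_one]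
  comul_eq_tmul_self := by
    simp [TensorProduct.comul_def, ha.comul_eq_tmul_self, hb.comul_eq_tmul_self]

theorem conv_apply_of_isGroupLikeElem {C : Type*} [AddCommMonoid C] [Module ℂ C]
    [Coalgebra ℂ C] (F G : C →ₗ[ℂ] ℂ) {x : C} (hx : IsGroupLikeElem ℂ x) :
    conv F G x = F x * G x := by
  simp [conv, hx.comul_eq_tmul_self]

theorem _root_.Module.Basis.repr_map_apply_of_map_basis {ι ι' R M N : Type*} [CommSemiring R]
    [AddCommMonoid M] [Module R M] [AddCommMonoid N] [Module R N] (b : Module.Basis ι R M)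
    (b' : Module.Basis ι' R N) (f : M →ₗ[R] N) {e : ι → ι'} (he : Function.Injective e)
    (c : ι → R) (hf : ∀ i, f (b i) = c i • b' (e i)) (x : M) (i : ι) :
    b'.repr (f x) (e i) = c i * b.repr x i := by
  have key : Finsupp.lapply (e i) ∘ₗ b'.repr.toLinearMap ∘ₗ f
      = c i • (Finsupp.lapply i ∘ₗ b.repr.toLinearMap) := by
    refine b.ext fun j => ?_
    by_cases hji : j = i
    · simp [hf, hji]
    · simp [hf, he.eq_iff, hji]
  simpa using LinearMap.congr_fun key x

namespace GroupLikeBasis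

variable {Γ : Type*} [CommGroup Γ] {A : Type*} [CommRing A] [HopfAlgebra ℂ A]
  (gb : GroupLikeBasis Γ A)

theorem isGroupLikeElem_of (g : Γ) : IsGroupLikeElem ℂ (gb.of g) :=
  ⟨gb.counit_of g, gb.comul_of g⟩

theorem span_of_image (s : Set Γ) :
    Submodule.span ℂ (gb.of '' s) = Submodule.span ℂ (gb.basis '' s) := by
  simp only [← gb.basis_eq]

end GroupLikeBasis

namespace Hopf2Cocycle

variable {Γ : Type*} [CommGroup Γ] {A : Type*} [CommRing A] [HopfAlgebra ℂ A]
  (gb : GroupLikeBasis Γ A) (c : Hopf2Cocycle A)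

theorem J_mul_Jinv_of (g h : Γ) :
    c.J (gb.of g ⊗ₜ[ℂ] gb.of h) * c.Jinv (gb.of g ⊗ₜ[ℂ] gb.of h) = 1 := by
  have hgh := (gb.isGroupLikeElem_of g).tmul (gb.isGroupLikeElem_of h)
  simpa [conv_apply_of_isGroupLikeElem _ _ hgh, hgh.counit_eq_one]
    using LinearMap.congr_fun c.conv_right_inv (gb.of g ⊗ₜ[ℂ] gb.of h)

def grouplikeCocycle (g h : Γ) : ℂˣ :=
  Units.mkOfMulEqOne _ _ (c.J_mul_Jinv_of gb g h)

theorem isTwoCocycle_grouplikeCocycle : IsTwoCocycle (c.grouplikeCocycle gb) := by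
  intro g h k
  have hg := gb.isGroupLikeElem_of g
  have hh := gb.isGroupLikeElem_of h
  have hk := gb.isGroupLikeElem_of k
  have hghk := (hg.tmul hh).tmul hk
  have := LinearMap.congr_fun c.cocycle ((gb.of g ⊗ₜ[ℂ] gb.of h) ⊗ₜ[ℂ] gb.of k)
  rw [conv_apply_of_isGroupLikeElem _ _ hghk, conv_apply_of_isGroupLikeElem _ _ hghk] at this
  ext
  simpa [grouplikeCocycle, LinearMap.mul'_apply, ← map_mul, hg.counit_eq_one, hk.counit_eq_one]
    using this

theorem mulJ_of (g h : Γ) :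
    c.mulJ (gb.of g ⊗ₜ[ℂ] gb.of h) = c.J (gb.of g ⊗ₜ[ℂ] gb.of h) • gb.of (g * h) := by
  simp [mulJ, TensorProduct.comul_def, gb.comul_of, LinearMap.mul'_apply, ← map_mul]

/-- The subgroup `Γ₀`. -/
def symmetricSubgroup : Subgroup Γ :=
  (c.isTwoCocycle_grouplikeCocycle gb).commutator.ker

theorem mem_symmetricSubgroup (g : Γ) :
    g ∈ c.symmetricSubgroup gb ↔
      ∀ h, c.J (gb.of g ⊗ₜ[ℂ] gb.of h) = c.J (gb.of h ⊗ₜ[ℂ] gb.of g) := by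
  rw [symmetricSubgroup, IsTwoCocycle.mem_ker_commutator]
  simp [Units.ext_iff, grouplikeCocycle]

def center : Submodule ℂ A where
  carrier := {a | ∀ b, c.mulJ (a ⊗ₜ[ℂ] b) = c.mulJ (b ⊗ₜ[ℂ] a)}
  zero_mem' := by simp
  add_mem' ha hb x := by simp [add_tmul, tmul_add, ha x, hb x]
  smul_mem' r a ha x := by
    rw [← smul_tmul', tmul_smul, map_smul, map_smul, ha x]

theorem of_mem_center_of_mem_symmetricSubgroup {g : Γ} (hg : g ∈ c.symmetricSubgroup gb) :
    gb.of g ∈ c.center := by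
  intro b
  refine LinearMap.congr_fun (gb.basis.ext fun h => ?_ : c.mulJ ∘ₗ TensorProduct.mk ℂ A A (gb.of g)
    = c.mulJ ∘ₗ (TensorProduct.mk ℂ A A).flip (gb.of g)) b
  simp [gb.basis_eq, mulJ_of, (c.mem_symmetricSubgroup gb g).mp hg h, mul_comm g h]

theorem repr_mulJ_tmul_of (a : A) (g h : Γ) :
    gb.basis.repr (c.mulJ (a ⊗ₜ[ℂ] gb.of h)) (g * h)
      = c.J (gb.of g ⊗ₜ[ℂ] gb.of h) * gb.basis.repr a g :=
  gb.basis.repr_map_apply_of_map_basis gb.basis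
    (c.mulJ ∘ₗ (TensorProduct.mk ℂ A A).flip (gb.of h))
    (mul_left_injective h) (fun g => c.J (gb.of g ⊗ₜ[ℂ] gb.of h))
    (fun g => by simp [gb.basis_eq, mulJ_of]) a g

theorem repr_mulJ_of_tmul (a : A) (g h : Γ) :
    gb.basis.repr (c.mulJ (gb.of h ⊗ₜ[ℂ] a)) (g * h)
      = c.J (gb.of h ⊗ₜ[ℂ] gb.of g) * gb.basis.repr a g :=
  gb.basis.repr_map_apply_of_map_basis gb.basis (c.mulJ ∘ₗ TensorProduct.mk ℂ A A (gb.of h))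
    (mul_left_injective h) (fun g => c.J (gb.of h ⊗ₜ[ℂ] gb.of g))
    (fun g => by simp [gb.basis_eq, mulJ_of, mul_comm h g]) a g

theorem support_subset_symmetricSubgroup {a : A} (ha : a ∈ c.center) :
    ↑(gb.basis.repr a).support ⊆ (c.symmetricSubgroup gb : Set Γ) := fun g hg =>
  (c.mem_symmetricSubgroup gb g).mpr fun h =>
    mul_right_cancel₀ (Finsupp.mem_support_iff.mp hg) <| by
      rw [← repr_mulJ_tmul_of, ← repr_mulJ_of_tmul, ha]

theorem center_eq_span : c.center = Submodule.span ℂ (gb.of '' c.symmetricSubgroup gb) := by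
  refine le_antisymm (fun a ha => ?_) (Submodule.span_le.mpr ?_)
  · rw [gb.span_of_image, Module.Basis.mem_span_image]
    exact c.support_subset_symmetricSubgroup gb ha
  · rintro _ ⟨g, hg, rfl⟩
    exact c.of_mem_center_of_mem_symmetricSubgroup gb hg

end Hopf2Cocycle

theorem statement11_general (Γ : Type*) [CommGroup Γ]
    (A : Type*) [CommRing A] [HopfAlgebra ℂ A] (gb : GroupLikeBasis Γ A)
    (c : Hopf2Cocycle A) :
    ∃ Γ₀ : Subgroup Γ,
      (∀ g : Γ, g ∈ Γ₀ ↔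
        ∀ h : Γ, c.J (gb.of g ⊗ₜ[ℂ] gb.of h) = c.J (gb.of h ⊗ₜ[ℂ] gb.of g)) ∧
      {a : A | ∀ b : A, c.mulJ (a ⊗ₜ[ℂ] b) = c.mulJ (b ⊗ₜ[ℂ] a)}
        = (Submodule.span ℂ (⇑gb.of '' (Γ₀ : Set Γ)) : Submodule ℂ A) :=
  ⟨c.symmetricSubgroup gb, c.mem_symmetricSubgroup gb,
    congrArg SetLike.coe (c.center_eq_span gb)⟩

/-- For a free abelian group `Γ` of finite rank and a Hopf 2-cocycle `J`
for `ℂ[Γ]`, the set `Γ₀ = {g | J(g ⊗ h) = J(h ⊗ g) ∀ h}` is a subgroup of `Γ`, and the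
center of the twisted algebra `ℂ[Γ]_J` is the `ℂ`-linear span of `Γ₀`. -/
theorem statement11 (Γ : Type*) [CommGroup Γ] (hfree : IsFreeAbelianOfFiniteRank Γ)
    (A : Type*) [CommRing A] [HopfAlgebra ℂ A] (gb : GroupLikeBasis Γ A)
    (c : Hopf2Cocycle A) :
    ∃ Γ₀ : Subgroup Γ,
      (∀ g : Γ, g ∈ Γ₀ ↔
        ∀ h : Γ, c.J (gb.of g ⊗ₜ[ℂ] gb.of h) = c.J (gb.of h ⊗ₜ[ℂ] gb.of g)) ∧
      {a : A | ∀ b : A, c.mulJ (a ⊗ₜ[ℂ] b) = c.mulJ (b ⊗ₜ[ℂ] a)}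
        = (Submodule.span ℂ (⇑gb.of '' (Γ₀ : Set Γ)) : Submodule ℂ A) :=
  statement11_general Γ A gb c

end Twisting
end
end
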